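/- arXiv:2405.01370 — 2 statements merged into one kernel-verified Lean document; each statement's English description precedes it below -/
import Mathlib

section
/- Let L be an invertible real n×n matrix and r ∈ ℤⁿ. Then the number of lattice points κ ∈ ℤⁿ such that Lκ lies in the cube Q_r := r + [0,1]ⁿ is at most ∏_{j=1}^{n} ( ⌊ Σ_{i=1}^{n} |(L^{−1})_{j i}| ⌋ + 1 ), i.e. the product over the rows of L^{−1} of one plus the integer part of the ℓ¹-norm of the row. -/
/-!
Since `κ = L⁻¹ (L κ)`, the `j`-th coordinate of `κ` is the pairing of the `j`-th row of `L⁻¹` with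
a point of the cube `r + [0,1]ⁿ`. As that point ranges over the cube, this pairing ranges over an
interval of length `∑ᵢ |(L⁻¹)ⱼᵢ|`, which contains at most `⌊∑ᵢ |(L⁻¹)ⱼᵢ|⌋ + 1` integers. So the
lattice points lie in a box of integer points with the claimed number of elements.
-/

open Matrix

lemma mul_mem_Icc_add_min_max {c r y : ℝ} (hy : y ∈ Set.Icc r (r + 1)) :
    c * y ∈ Set.Icc (c * r + min c 0) (c * r + max c 0) := by
  obtain ⟨h₁, h₂⟩ := hy
  rcases le_total 0 c with hc | hc
  · rw [min_eq_right hc, max_eq_left hc]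
    constructor <;> nlinarith
  · rw [min_eq_left hc, max_eq_right hc]
    constructor <;> nlinarith

lemma Int.card_Icc_ceil_floor_add_le {a w : ℝ} (hw : 0 ≤ w) :
    ((Finset.Icc ⌈a⌉ ⌊a + w⌋).card : ℤ) ≤ ⌊w⌋ + 1 := by
  have hfloor : ⌊a + w⌋ ≤ ⌈a⌉ + ⌊w⌋ :=
    calc ⌊a + w⌋ ≤ ⌊(⌈a⌉ : ℝ) + w⌋ := Int.floor_le_floor (by linarith [Int.le_ceil a])
      _ = ⌈a⌉ + ⌊w⌋ := Int.floor_intCast_add _ _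
  have hw' : 0 ≤ ⌊w⌋ := Int.floor_nonneg.mpr hw
  rw [Int.card_Icc]
  omega

section LatticePoints

variable {ι : Type*} [Fintype ι]

lemma dotProduct_mem_Icc_add_sum_min_max (v r y : ι → ℝ)
    (hy : ∀ i, y i ∈ Set.Icc (r i) (r i + 1)) :
    v ⬝ᵥ y ∈ Set.Icc (v ⬝ᵥ r + ∑ i, min (v i) 0) (v ⬝ᵥ r + ∑ i, max (v i) 0) := by
  simp only [dotProduct, ← Finset.sum_add_distrib]
  exact ⟨Finset.sum_le_sum fun i _ => (mul_mem_Icc_add_min_max (hy i)).1,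
    Finset.sum_le_sum fun i _ => (mul_mem_Icc_add_min_max (hy i)).2⟩

lemma sum_max_zero_eq_sum_min_zero_add_sum_abs (v : ι → ℝ) :
    ∑ i, max (v i) 0 = ∑ i, min (v i) 0 + ∑ i, |v i| := by
  rw [← Finset.sum_add_distrib]
  refine Finset.sum_congr rfl fun i _ => ?_
  rw [← sub_zero (v i), ← max_sub_min_eq_abs', sub_zero]
  ring

def cubeLatticePoints (L : Matrix ι ι ℝ) (r : ι → ℝ) : Set (ι → ℤ) :=
  {κ | ∀ i, (L *ᵥ fun j => (κ j : ℝ)) i ∈ Set.Icc (r i) (r i + 1)}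

variable [DecidableEq ι]

lemma cubeLatticePoints_subset_Icc {L : Matrix ι ι ℝ} (hL : IsUnit L.det) (r : ι → ℝ) :
    cubeLatticePoints L r ⊆
      ↑(Finset.Icc (fun j => ⌈L⁻¹ j ⬝ᵥ r + ∑ i, min (L⁻¹ j i) 0⌉)
        (fun j => ⌊(L⁻¹ j ⬝ᵥ r + ∑ i, min (L⁻¹ j i) 0) + ∑ i, |L⁻¹ j i|⌋)) := by
  intro κ hκ
  have hκ_eq : ∀ j, (κ j : ℝ) = L⁻¹ j ⬝ᵥ (L *ᵥ fun j => (κ j : ℝ)) := fun j => by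
    change _ = (L⁻¹ *ᵥ (L *ᵥ _)) j
    rw [mulVec_mulVec, nonsing_inv_mul L hL, one_mulVec]
  refine Finset.mem_coe.mpr (Finset.mem_Icc.mpr ⟨fun j => ?_, fun j => ?_⟩)
  all_goals
    obtain ⟨hlo, hhi⟩ := dotProduct_mem_Icc_add_sum_min_max (L⁻¹ j) r _ hκ
    rw [sum_max_zero_eq_sum_min_zero_add_sum_abs, ← add_assoc, ← hκ_eq] at hhi
    rw [← hκ_eq] at hlo
  · exact Int.ceil_le.mpr hlo
  · exact Int.le_floor.mpr hhi

end LatticePoints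

/-- for an invertible real `n×n` matrix `L` and `r ∈ ℤⁿ`, the set of
lattice points `κ ∈ ℤⁿ` with `Lκ ∈ Q_r = r + [0,1]ⁿ` is finite, with at most
`∏ⱼ (⌊∑ᵢ |(L⁻¹)ⱼᵢ|⌋ + 1)` elements. -/
theorem stmt8 {n : ℕ} (L : Matrix (Fin n) (Fin n) ℝ) (hL : IsUnit L.det)
    (r : Fin n → ℤ) :
    {κ : Fin n → ℤ | ∀ i : Fin n,
        (r i : ℝ) ≤ L.mulVec (fun j => (κ j : ℝ)) i
          ∧ L.mulVec (fun j => (κ j : ℝ)) i ≤ (r i : ℝ) + 1}.Finite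
    ∧ ({κ : Fin n → ℤ | ∀ i : Fin n,
          (r i : ℝ) ≤ L.mulVec (fun j => (κ j : ℝ)) i
            ∧ L.mulVec (fun j => (κ j : ℝ)) i ≤ (r i : ℝ) + 1}.ncard : ℤ)
        ≤ ∏ j : Fin n, (⌊∑ i : Fin n, |L⁻¹ j i|⌋ + 1) := by
  show (cubeLatticePoints L (fun i => (r i : ℝ))).Finite ∧
    ((cubeLatticePoints L (fun i => (r i : ℝ))).ncard : ℤ) ≤ _
  have hsub := cubeLatticePoints_subset_Icc hL (fun i => (r i : ℝ))
  refine ⟨(Finset.finite_toSet _).subset hsub, ?_⟩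
  calc ((cubeLatticePoints L (fun i => (r i : ℝ))).ncard : ℤ)
      ≤ (Finset.Icc _ _).card := by
        exact_mod_cast (Set.ncard_le_ncard hsub (Finset.finite_toSet _)).trans_eq
          (Set.ncard_coe_finset _)
    _ = ∏ j, ((Finset.Icc _ _).card : ℤ) := by rw [Pi.card_Icc]; push_cast; rfl
    _ ≤ ∏ j, (⌊∑ i, |L⁻¹ j i|⌋ + 1) := Finset.prod_le_prod (fun j _ => by positivity)
        fun j _ => Int.card_Icc_ceil_floor_add_le (Finset.sum_nonneg fun i _ => abs_nonneg _)
end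

section
/- (Sampling inequality in weighted Wiener spaces.) Fix s ≥ 0 and let v(x) = (1+|x|)^s on ℝⁿ. Let f : ℝⁿ → ℂ be continuous with ‖f‖_{W(L¹_v)} := Σ_{r∈ℤⁿ} v(r) sup_{x∈Q_r} |f(x)| < ∞, where Q_r := r + [0,1]ⁿ. Then for every invertible real n×n matrix L, Σ_{κ∈ℤⁿ} v(Lκ) |f(Lκ)| ≤ C_{L,v} ‖f‖_{W(L¹_v)}, where C_{L,v} := M_v ∏_{j=1}^{n} ( ⌊ Σ_{i=1}^{n} |(L^{−1})_{j i}| ⌋ + 1 ) and M_v := max_{z∈[0,1]ⁿ} v(z). -/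
/-!
Each sample point `Lκ` lies in the cube `Q_r` with `r = ⌊Lκ⌋`, and there
`v(Lκ) |f(Lκ)| ≤ M_v v(r) sup_{Q_r} |f|` because `v(r + z) ≤ v(r) v(z)`. If `⌊Lκ⌋ = r`
then `κ = L⁻¹(Lκ)` with `Lκ ∈ Q_r`, so `κ_j` is an integer in an interval of length
`∑ᵢ |(L⁻¹)ⱼᵢ|`; hence the map `κ ↦ ⌊Lκ⌋` has fibres of size at most
`∏ⱼ (⌊∑ᵢ |(L⁻¹)ⱼᵢ|⌋ + 1)`, and summing over the fibres gives the inequality.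
-/

open MeasureTheory Matrix Filter
open scoped ENNReal NNReal

noncomputable section

/-- `ℝⁿ` with the Euclidean norm. -/
abbrev Euc (n : ℕ) := EuclideanSpace ℝ (Fin n)

/-- Turn a plain vector into a point of Euclidean space. -/
def toE {n : ℕ} (x : Fin n → ℝ) : Euc n := (EuclideanSpace.equiv (Fin n) ℝ).symm x

/-- The cube `Q_r = r + [0,1]ⁿ`. -/
def cube {n : ℕ} (r : Fin n → ℤ) : Set (Euc n) :=
  {x : Euc n | ∀ i, (r i : ℝ) ≤ x i ∧ x i ≤ (r i : ℝ) + 1}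

/-- `sup_{x ∈ Q_r} |f(x)|`. -/
def supCube {n : ℕ} (f : Euc n → ℂ) (r : Fin n → ℤ) : ℝ :=
  sSup ((fun x => ‖f x‖) '' cube r)

/-- The polynomial weight `v(x) = (1+|x|)^s`. -/
def polyW {n : ℕ} (s : ℝ) (x : Euc n) : ℝ := (1 + ‖x‖) ^ s

/-- `M_v = max_{z ∈ [0,1]ⁿ} v(z)`. -/
def Mv (n : ℕ) (s : ℝ) : ℝ :=
  sSup ((polyW s) '' {z : Euc n | ∀ i, z i ∈ Set.Icc (0:ℝ) 1})

open Finset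

lemma isCompact_setOf_forall_mem_Icc {n : ℕ} (a b : Fin n → ℝ) :
    IsCompact {x : Euc n | ∀ i, x i ∈ Set.Icc (a i) (b i)} := by
  have : {x : Euc n | ∀ i, x i ∈ Set.Icc (a i) (b i)}
      = (EuclideanSpace.equiv (Fin n) ℝ).toHomeomorph ⁻¹' Set.Icc a b := by
    ext; simp [Pi.le_def, forall_and]
  rw [this, Homeomorph.isCompact_preimage]
  exact isCompact_Icc

lemma isCompact_cube {n : ℕ} (r : Fin n → ℤ) : IsCompact (cube r) :=
  isCompact_setOf_forall_mem_Icc _ _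

lemma toE_mem_cube_floor {n : ℕ} (y : Fin n → ℝ) : toE y ∈ cube fun i => ⌊y i⌋ :=
  fun i => ⟨Int.floor_le (y i), (Int.lt_floor_add_one (y i)).le⟩

section Weight

variable {n : ℕ} {s : ℝ}

lemma polyW_nonneg (x : Euc n) : 0 ≤ polyW s x :=
  Real.rpow_nonneg (by positivity) s

lemma continuous_polyW : Continuous (polyW (n := n) s) :=
  (continuous_const.add continuous_norm).rpow_const fun x =>
    Or.inl (by positivity : (0 : ℝ) < 1 + ‖x‖).ne'

lemma polyW_add_le (hs : 0 ≤ s) (x y : Euc n) : polyW s (x + y) ≤ polyW s x * polyW s y := by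
  unfold polyW
  rw [← Real.mul_rpow (by positivity) (by positivity)]
  gcongr
  nlinarith [norm_add_le x y, norm_nonneg x, norm_nonneg y]

lemma polyW_le_Mv {z : Euc n} (hz : ∀ i, z i ∈ Set.Icc (0 : ℝ) 1) : polyW s z ≤ Mv n s :=
  le_csSup ((isCompact_setOf_forall_mem_Icc 0 1).image continuous_polyW).bddAbove ⟨z, hz, rfl⟩

lemma Mv_nonneg : 0 ≤ Mv n s :=
  (polyW_nonneg 0).trans (polyW_le_Mv fun _ => ⟨le_rfl, zero_le_one⟩)

lemma polyW_le_Mv_mul_of_mem_cube (hs : 0 ≤ s) {r : Fin n → ℤ} {x : Euc n} (hx : x ∈ cube r) :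
    polyW s x ≤ Mv n s * polyW s (toE fun i => (r i : ℝ)) := by
  have hz : ∀ i, (x - toE fun i => (r i : ℝ)) i ∈ Set.Icc (0 : ℝ) 1 := fun i => by
    obtain ⟨h0, h1⟩ := hx i
    exact show x i - r i ∈ Set.Icc (0 : ℝ) 1 from ⟨by linarith, by linarith⟩
  calc polyW s x = polyW s ((toE fun i => (r i : ℝ)) + (x - toE fun i => (r i : ℝ))) := by
        rw [add_sub_cancel]
    _ ≤ polyW s (toE fun i => (r i : ℝ)) * Mv n s :=
        (polyW_add_le hs _ _).trans (mul_le_mul_of_nonneg_left (polyW_le_Mv hz) (polyW_nonneg _))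
    _ = Mv n s * polyW s (toE fun i => (r i : ℝ)) := mul_comm _ _

end Weight

section SupCube

variable {n : ℕ} {f : Euc n → ℂ}

lemma supCube_nonneg (f : Euc n → ℂ) (r : Fin n → ℤ) : 0 ≤ supCube f r :=
  Real.sSup_nonneg (by rintro _ ⟨x, _, rfl⟩; positivity)

lemma norm_le_supCube (hf : Continuous f) {r : Fin n → ℤ} {x : Euc n} (hx : x ∈ cube r) :
    ‖f x‖ ≤ supCube f r :=
  le_csSup ((isCompact_cube r).image hf.norm).bddAbove ⟨x, hx, rfl⟩

lemma polyW_mul_norm_le_of_mem_cube {s : ℝ} (hs : 0 ≤ s) (hf : Continuous f) {r : Fin n → ℤ}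
    {x : Euc n} (hx : x ∈ cube r) :
    polyW s x * ‖f x‖ ≤ Mv n s * (polyW s (toE fun i => (r i : ℝ)) * supCube f r) := by
  rw [← mul_assoc]
  exact mul_le_mul (polyW_le_Mv_mul_of_mem_cube hs hx) (norm_le_supCube hf hx) (norm_nonneg _)
    (mul_nonneg Mv_nonneg (polyW_nonneg _))

end SupCube

lemma summable_comp_and_tsum_comp_le {α β : Type*} {g : α → β} {h : β → ℝ} (h0 : 0 ≤ h)
    (hh : Summable h) {N : ℕ} (hfib : ∀ b, ∃ t : Finset α, #t ≤ N ∧ g ⁻¹' {b} ⊆ t) :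
    Summable (h ∘ g) ∧ ∑' a, h (g a) ≤ N * ∑' b, h b := by
  classical
  have hsum : ∀ u : Finset α, ∑ a ∈ u, h (g a) ≤ N * ∑' b, h b := by
    intro u
    rw [Finset.sum_comp]
    calc ∑ b ∈ u.image g, #{a ∈ u | g a = b} • h b ≤ ∑ b ∈ u.image g, N * h b := by
          refine sum_le_sum fun b _ => ?_
          obtain ⟨t, htN, hsub⟩ := hfib b
          have hcard : #{a ∈ u | g a = b} ≤ N :=
            (card_le_card fun a ha => mem_coe.1 (hsub (mem_filter.1 ha).2)).trans htN
          rw [nsmul_eq_mul]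
          gcongr
          exact h0 b
      _ = N * ∑ b ∈ u.image g, h b := (mul_sum _ _ _).symm
      _ ≤ N * ∑' b, h b := by
          gcongr
          exact hh.sum_le_tsum _ fun b _ => h0 b
  exact ⟨summable_of_sum_le (fun a => h0 (g a)) hsum,
    Real.tsum_le_of_sum_le (fun a => h0 (g a)) hsum⟩

lemma mul_mem_Icc_of_mem_Icc_zero_one (a : ℝ) {t : ℝ} (ht : t ∈ Set.Icc (0 : ℝ) 1) :
    a * t ∈ Set.Icc (min 0 a) (min 0 a + |a|) := by
  obtain ⟨ht0, ht1⟩ := ht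
  rcases le_total 0 a with ha | ha
  · rw [min_eq_left ha, abs_of_nonneg ha]
    constructor <;> nlinarith
  · rw [min_eq_right ha, abs_of_nonpos ha]
    constructor <;> nlinarith

lemma dotProduct_mem_Icc_of_floor_eq {n : ℕ} (a y : Fin n → ℝ) {r : Fin n → ℤ}
    (hy : ∀ i, ⌊y i⌋ = r i) :
    a ⬝ᵥ y ∈ Set.Icc (∑ i, (a i * r i + min 0 (a i)))
      (∑ i, (a i * r i + min 0 (a i)) + ∑ i, |a i|) := by
  have hterm : ∀ i, a i * y i ∈ Set.Icc (a i * r i + min 0 (a i))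
      (a i * r i + min 0 (a i) + |a i|) := fun i => by
    obtain ⟨h0, h1⟩ := Int.floor_eq_iff.1 (hy i)
    obtain ⟨hlo, hhi⟩ := mul_mem_Icc_of_mem_Icc_zero_one (a i)
      (show y i - r i ∈ Set.Icc (0 : ℝ) 1 from ⟨by linarith, by linarith⟩)
    constructor <;> linarith
  rw [← sum_add_distrib]
  exact ⟨sum_le_sum fun i _ => (hterm i).1, sum_le_sum fun i _ => (hterm i).2⟩

lemma mem_Icc_ceil_add_floor {x c : ℝ} {k : ℤ} (hk : (k : ℝ) ∈ Set.Icc x (x + c)) :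
    k ∈ Finset.Icc ⌈x⌉ (⌈x⌉ + ⌊c⌋) := by
  rw [Finset.mem_Icc]
  refine ⟨Int.ceil_le.2 hk.1, ?_⟩
  have : k - ⌈x⌉ ≤ ⌊c⌋ := Int.le_floor.2 (by push_cast; linarith [hk.2, Int.le_ceil x])
  omega

lemma exists_finset_floor_mulVec_fiber {n : ℕ} (L : Matrix (Fin n) (Fin n) ℝ)
    (hL : IsUnit L.det) (r : Fin n → ℤ) :
    ∃ t : Finset (Fin n → ℤ), #t = ∏ j, (⌊∑ i, |L⁻¹ j i|⌋ + 1).toNat ∧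
      (fun κ : Fin n → ℤ => fun j => ⌊(L *ᵥ fun i => (κ i : ℝ)) j⌋) ⁻¹' {r} ⊆ t := by
  set lo : Fin n → ℝ := fun j => ∑ i, (L⁻¹ j i * r i + min 0 (L⁻¹ j i))
  refine ⟨Fintype.piFinset fun j => Finset.Icc ⌈lo j⌉ (⌈lo j⌉ + ⌊∑ i, |L⁻¹ j i|⌋), ?_, ?_⟩
  · rw [Fintype.card_piFinset]
    refine prod_congr rfl fun j _ => ?_
    rw [Int.card_Icc]
    congr 1
    ring
  · intro κ hκ
    rw [Set.mem_preimage, Set.mem_singleton_iff, funext_iff] at hκ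
    have hκ_eq : (fun i => (κ i : ℝ)) = L⁻¹ *ᵥ (L *ᵥ fun i => (κ i : ℝ)) := by
      rw [mulVec_mulVec, nonsing_inv_mul L hL, one_mulVec]
    rw [mem_coe, Fintype.mem_piFinset]
    intro j
    apply mem_Icc_ceil_add_floor
    rw [congrFun hκ_eq j]
    exact dotProduct_mem_Icc_of_floor_eq (L⁻¹ j) _ hκ

lemma natCast_toNat_floor_add_one {c : ℝ} (hc : 0 ≤ c) :
    (((⌊c⌋ + 1).toNat : ℕ) : ℝ) = (⌊c⌋ : ℝ) + 1 := by
  rw [← Int.cast_natCast, Int.toNat_of_nonneg (by positivity)]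
  push_cast
  rfl

/-- sampling inequality in weighted Wiener spaces: if `f` is continuous
with finite weighted Wiener norm `∑_r v(r) sup_{Q_r} |f| < ∞`, then for every
invertible `L`, `∑_κ v(Lκ)|f(Lκ)| ≤ C_{L,v} ∑_r v(r) sup_{Q_r} |f|`, with
`C_{L,v} = M_v ∏ⱼ(⌊∑ᵢ |(L⁻¹)ⱼᵢ|⌋ + 1)`. -/
theorem stmt9 {n : ℕ} (s : ℝ) (hs : 0 ≤ s) (f : Euc n → ℂ) (hf : Continuous f)
    (hW : Summable fun r : Fin n → ℤ => polyW s (toE fun i => (r i : ℝ)) * supCube f r)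
    (L : Matrix (Fin n) (Fin n) ℝ) (hL : IsUnit L.det) :
    Summable (fun κ : Fin n → ℤ =>
        polyW s (toE (L.mulVec fun i => (κ i : ℝ)))
          * ‖f (toE (L.mulVec fun i => (κ i : ℝ)))‖)
    ∧ (∑' κ : Fin n → ℤ,
        polyW s (toE (L.mulVec fun i => (κ i : ℝ)))
          * ‖f (toE (L.mulVec fun i => (κ i : ℝ)))‖)
      ≤ (Mv n s * ∏ j : Fin n, ((⌊∑ i : Fin n, |L⁻¹ j i|⌋ : ℝ) + 1))
        * ∑' r : Fin n → ℤ, polyW s (toE fun i => (r i : ℝ)) * supCube f r := by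
  set T : (Fin n → ℤ) → ℝ := fun κ => polyW s (toE (L *ᵥ fun i => (κ i : ℝ)))
    * ‖f (toE (L *ᵥ fun i => (κ i : ℝ)))‖
  set W : (Fin n → ℤ) → ℝ := fun r => polyW s (toE fun i => (r i : ℝ)) * supCube f r
  set g : (Fin n → ℤ) → (Fin n → ℤ) := fun κ j => ⌊(L *ᵥ fun i => (κ i : ℝ)) j⌋
  have hT_le : ∀ κ, T κ ≤ Mv n s * W (g κ) := fun κ =>
    polyW_mul_norm_le_of_mem_cube hs hf (toE_mem_cube_floor _)
  obtain ⟨hWg, hWg_le⟩ := summable_comp_and_tsum_comp_le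
    (fun r => mul_nonneg (polyW_nonneg _) (supCube_nonneg f r)) hW
    fun r => (exists_finset_floor_mulVec_fiber L hL r).imp fun _ ht => ⟨ht.1.le, ht.2⟩
  have hT : Summable T := (hWg.mul_left _).of_nonneg_of_le
    (fun κ => mul_nonneg (polyW_nonneg _) (norm_nonneg _)) hT_le
  have hN : ((∏ j, (⌊∑ i, |L⁻¹ j i|⌋ + 1).toNat : ℕ) : ℝ)
      = ∏ j, ((⌊∑ i, |L⁻¹ j i|⌋ : ℝ) + 1) := by
    rw [Nat.cast_prod]
    exact prod_congr rfl fun j _ =>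
      natCast_toNat_floor_add_one (sum_nonneg fun i _ => abs_nonneg _)
  refine ⟨hT, ?_⟩
  calc ∑' κ, T κ ≤ ∑' κ, Mv n s * W (g κ) := hT.tsum_le_tsum hT_le (hWg.mul_left _)
    _ = Mv n s * ∑' κ, W (g κ) := tsum_mul_left
    _ ≤ Mv n s * (_ * ∑' r, W r) := mul_le_mul_of_nonneg_left hWg_le Mv_nonneg
    _ = _ := by rw [hN, mul_assoc]
end
end
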